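/- arXiv:2406.16263 — 6 statements merged into one kernel-verified Lean document; each statement's English description precedes it below -/
import Mathlib

section
/- Let Γ, D ∈ ℝ^{p×p} be symmetric matrices with Γ positive definite and -2Γ⁻¹ ≤ D < 0 (i.e., D negative definite and D + 2Γ⁻¹ positive semidefinite). Then with A := I + ΓD, B := Γ, C := I, the matrix P := -D is symmetric positive definite and satisfies AᵀPA - P ≤ 0 and C = Bᵀ(I-A)^{-T}P. -/
open Matrix

/-
The Lyapunov difference `P - AᵀPA` of `A = 1 + ΓD`, `P = -D` factors as the congruence
`(ΓD)ᵀ (D + 2Γ⁻¹) (ΓD)`, which is positive semidefinite by the lower bound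
`-2Γ⁻¹ ≤ D`. The identity `1 = Γᵀ (1 - A)⁻ᵀ P` holds because `1 - A = Γ P`.
-/

namespace Matrix

variable {n R : Type*} [Fintype n] [DecidableEq n] [CommRing R]

theorem neg_sub_transpose_one_add_mul_mul_eq {Γ D : Matrix n n R} (hΓ : IsUnit Γ.det)
    (hΓsymm : Γᵀ = Γ) (hDsymm : Dᵀ = D) :
    -D - (1 + Γ * D)ᵀ * (-D) * (1 + Γ * D) = (Γ * D)ᵀ * (D + (2 : R) • Γ⁻¹) * (Γ * D) := by
  have hcross : D * Γ * ((2 : R) • Γ⁻¹) * (Γ * D) = (2 : R) • (D * Γ * D) := by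
    rw [Matrix.mul_smul, mul_assoc D Γ Γ⁻¹, mul_nonsing_inv Γ hΓ, mul_one, smul_mul_assoc,
      ← mul_assoc]
  rw [transpose_add, transpose_one, transpose_mul, hΓsymm, hDsymm, mul_add (D * Γ),
    add_mul (D * Γ * D), hcross, two_smul]
  noncomm_ring

theorem transpose_mul_transpose_inv_mul_mul_eq_one {Γ P : Matrix n n R} (hΓ : IsUnit Γ.det)
    (hP : IsUnit P.det) (hPsymm : Pᵀ = P) : Γᵀ * ((Γ * P)⁻¹)ᵀ * P = 1 := by
  rw [mul_inv_rev, transpose_mul, transpose_nonsing_inv, transpose_nonsing_inv, hPsymm,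
    ← mul_assoc Γᵀ, mul_nonsing_inv _ (isUnit_det_transpose Γ hΓ), one_mul,
    nonsing_inv_mul P hP]

end Matrix

theorem stmt0_general {p : ℕ} (Γ D : Matrix (Fin p) (Fin p) ℝ)
    (hΓ : Γ.PosDef)
    (hDneg : (-D).PosDef) (h2 : (D + (2:ℝ) • Γ⁻¹).PosSemidef) :
    (-D).PosDef ∧
    (((-D) : Matrix (Fin p) (Fin p) ℝ) -
      (1 + Γ * D)ᵀ * (-D) * (1 + Γ * D)).PosSemidef ∧
    (1 : Matrix (Fin p) (Fin p) ℝ) = Γᵀ * ((1 - (1 + Γ * D))⁻¹)ᵀ * (-D) := by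
  have hΓdet : IsUnit Γ.det := (isUnit_iff_isUnit_det Γ).mp hΓ.isUnit
  have hPdet : IsUnit (-D).det := (isUnit_iff_isUnit_det _).mp hDneg.isUnit
  have hPsymm : (-D)ᵀ = -D := hDneg.isHermitian
  have hDsymm : Dᵀ = D := by simpa using hPsymm
  refine ⟨hDneg, ?_, ?_⟩
  · rw [neg_sub_transpose_one_add_mul_mul_eq hΓdet hΓ.isHermitian hDsymm]
    exact h2.conjTranspose_mul_mul_same (Γ * D)
  · have hIA : (1 : Matrix (Fin p) (Fin p) ℝ) - (1 + Γ * D) = Γ * (-D) := by noncomm_ring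
    rw [hIA, transpose_mul_transpose_inv_mul_mul_eq_one hΓdet hPdet hPsymm]

/-- the discrete-time IRC realization satisfies the NI LMI conditions. -/
theorem stmt0 {p : ℕ} (Γ D : Matrix (Fin p) (Fin p) ℝ)
    (hΓ : Γ.PosDef) (hDsym : D.IsHermitian)
    (hDneg : (-D).PosDef) (h2 : (D + (2:ℝ) • Γ⁻¹).PosSemidef) :
    (-D).PosDef ∧
    (((-D) : Matrix (Fin p) (Fin p) ℝ) -
      (1 + Γ * D)ᵀ * (-D) * (1 + Γ * D)).PosSemidef ∧
    (1 : Matrix (Fin p) (Fin p) ℝ) = Γᵀ * ((1 - (1 + Γ * D))⁻¹)ᵀ * (-D) :=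
  stmt0_general Γ D hΓ hDneg h2
end

section
/- Let A ∈ ℝ^{n×n}, B ∈ ℝ^{n×p}, C ∈ ℝ^{p×n}, and P ∈ ℝ^{n×n} symmetric positive definite with det(I - A) ≠ 0 and C = Bᵀ(I-A)^{-T}P. Then the DC gain G(1) := C(I-A)⁻¹B equals CP⁻¹Cᵀ and is symmetric positive semidefinite; if moreover C has full row rank, then G(1) is positive definite. -/
/-! With `K = (I - A)⁻¹ B` the coupling condition reads `C = Kᵀ P`, so the DC gain is the
congruence `Kᵀ P K` of `P`, hence positive semidefinite, and since `P K = Cᵀ` it also equals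
`C P⁻¹ Cᵀ`, the congruence of `P⁻¹` by `Cᵀ`; this is positive definite once `Cᵀ` is injective,
i.e. once `C` has full row rank. -/

open Matrix

namespace Matrix

variable {R : Type*} {m n : Type*} [Fintype n]

theorem vecMul_injective_of_rank_eq_card [Field R] [Fintype m] {M : Matrix m n R}
    (h : M.rank = Fintype.card m) : Function.Injective M.vecMul :=
  vecMul_injective_iff.mpr <| linearIndependent_iff_card_eq_finrank_span.mpr <| by
    rw [← h, rank_eq_finrank_span_row, Set.finrank]

theorem transpose_mul_mul_same_eq_mul_inv_mul_transpose [CommRing R] [DecidableEq n]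
    {P : Matrix n n R} (hPt : Pᵀ = P) (hP : IsUnit P.det) (K : Matrix n m R) :
    Kᵀ * P * K = (Kᵀ * P) * P⁻¹ * (Kᵀ * P)ᵀ := by
  rw [transpose_mul, transpose_transpose, hPt, Matrix.mul_assoc (Kᵀ * P),
    nonsing_inv_mul_cancel_left _ _ hP]

end Matrix

theorem stmt2_general {n p : ℕ} (A : Matrix (Fin n) (Fin n) ℝ) (B : Matrix (Fin n) (Fin p) ℝ)
    (C : Matrix (Fin p) (Fin n) ℝ) (P : Matrix (Fin n) (Fin n) ℝ)
    (hP : P.PosDef)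
    (hC : C = Bᵀ * ((1 - A)⁻¹)ᵀ * P) :
    C * (1 - A)⁻¹ * B = C * P⁻¹ * Cᵀ ∧
    (C * (1 - A)⁻¹ * B).PosSemidef ∧
    (C.rank = p → (C * (1 - A)⁻¹ * B).PosDef) := by
  set K := (1 - A)⁻¹ * B
  have hCK : C = Kᵀ * P := by rw [hC, transpose_mul]
  have hgain : C * (1 - A)⁻¹ * B = Kᵀ * P * K := by rw [hCK, Matrix.mul_assoc _ (1 - A)⁻¹]
  have hPt : Pᵀ = P := isHermitian_iff_isSymm.mp hP.isHermitian
  have hdc : C * (1 - A)⁻¹ * B = C * P⁻¹ * Cᵀ := by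
    have hdet : IsUnit P.det := (isUnit_iff_isUnit_det P).mp hP.isUnit
    rw [hgain, transpose_mul_mul_same_eq_mul_inv_mul_transpose hPt hdet K, hCK]
  refine ⟨hdc, ?_, fun hrank => ?_⟩
  · rw [hgain, ← conjTranspose_eq_transpose_of_trivial]
    exact hP.posSemidef.conjTranspose_mul_mul_same K
  · rw [hdc, ← conjTranspose_eq_transpose_of_trivial]
    exact hP.inv.mul_mul_conjTranspose_same
      (vecMul_injective_of_rank_eq_card (by rw [hrank, Fintype.card_fin]))

/-- the DC gain G(1) = C(I-A)⁻¹B equals CP⁻¹Cᵀ, is symmetric PSD,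
and is positive definite when C has full row rank. -/
theorem stmt2 {n p : ℕ} (A : Matrix (Fin n) (Fin n) ℝ) (B : Matrix (Fin n) (Fin p) ℝ)
    (C : Matrix (Fin p) (Fin n) ℝ) (P : Matrix (Fin n) (Fin n) ℝ)
    (hP : P.PosDef) (hdet : (1 - A).det ≠ 0)
    (hC : C = Bᵀ * ((1 - A)⁻¹)ᵀ * P) :
    C * (1 - A)⁻¹ * B = C * P⁻¹ * Cᵀ ∧
    (C * (1 - A)⁻¹ * B).PosSemidef ∧
    (C.rank = p → (C * (1 - A)⁻¹ * B).PosDef) :=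
  stmt2_general A B C P hP hC
end

section
/- Consider the discrete-time system x_{k+1} = Ax_k + Bu_k, y_k = Cx_k with det(I-A) ≠ 0, and suppose there exists symmetric P > 0 with AᵀPA - P ≤ 0 and C = Bᵀ(I-A)^{-T}P. Then V(x) := (1/2)xᵀPx satisfies the discrete-time negative imaginary dissipation inequality V(x_{k+1}) - V(x_k) ≤ u_kᵀ(y_{k+1} - y_k) for all states x_k ∈ ℝⁿ and inputs u_k ∈ ℝᵖ. -/
/-!
With `v = (1 - A)⁻¹ B u` the input enters as `B u = (1 - A) v`, so the next state is
`A (x - v) + v`, and the hypothesis on `C` turns the supply rate into `u ⬝ C z = v ⬝ P z`.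
Writing `x = w + v`, the gap between supply and storage increment is exactly
`½ wᵀ (P - Aᵀ P A) w ≥ 0`.
-/

open Matrix

section QuadraticIncrement

variable {R m n p : Type*} [CommRing R] [Fintype m] [Fintype n] [Fintype p]

lemma Matrix.IsSymm.dotProduct_mulVec_comm {P : Matrix n n R} (hP : P.IsSymm) (x y : n → R) :
    x ⬝ᵥ P *ᵥ y = y ⬝ᵥ P *ᵥ x := by
  conv_lhs => rw [← hP.eq]
  exact dotProduct_transpose_mulVec P x y

lemma dotProduct_transpose_mul_mul_mulVec_self (A : Matrix m n R) (P : Matrix m m R)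
    (w : n → R) : w ⬝ᵥ (Aᵀ * P * A) *ᵥ w = (A *ᵥ w) ⬝ᵥ P *ᵥ (A *ᵥ w) := by
  rw [← mulVec_mulVec, ← mulVec_mulVec, dotProduct_transpose_mulVec]
  exact dotProduct_comm _ _

lemma dotProduct_transpose_mul_transpose_mul_mulVec (B : Matrix n p R) (M P : Matrix n n R)
    (u : p → R) (z : n → R) : u ⬝ᵥ (Bᵀ * Mᵀ * P) *ᵥ z = (M *ᵥ B *ᵥ u) ⬝ᵥ P *ᵥ z := by
  rw [← mulVec_mulVec, ← mulVec_mulVec, dotProduct_transpose_mulVec, dotProduct_comm,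
    dotProduct_transpose_mulVec, dotProduct_comm]

lemma Matrix.IsSymm.quadratic_increment {P : Matrix n n R} (hP : P.IsSymm) (A : Matrix n n R)
    (w v : n → R) :
    (A *ᵥ w + v) ⬝ᵥ P *ᵥ (A *ᵥ w + v) - (w + v) ⬝ᵥ P *ᵥ (w + v)
      = 2 * (v ⬝ᵥ P *ᵥ ((A *ᵥ w + v) - (w + v))) - w ⬝ᵥ (P - Aᵀ * P * A) *ᵥ w := by
  rw [sub_mulVec, dotProduct_sub, dotProduct_transpose_mul_mul_mulVec_self]
  simp only [mulVec_add, mulVec_sub, dotProduct_add, add_dotProduct, dotProduct_sub]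
  rw [hP.dotProduct_mulVec_comm (A *ᵥ w) v, hP.dotProduct_mulVec_comm w v]
  ring

end QuadraticIncrement

lemma Matrix.PosSemidef.half_quadratic_increment_le {n : Type*} [Fintype n] {P A : Matrix n n ℝ}
    (hP : P.IsSymm) (hLyap : (P - Aᵀ * P * A).PosSemidef) (w v : n → ℝ) :
    (1/2) * ((A *ᵥ w + v) ⬝ᵥ P *ᵥ (A *ᵥ w + v)) - (1/2) * ((w + v) ⬝ᵥ P *ᵥ (w + v))
      ≤ v ⬝ᵥ P *ᵥ ((A *ᵥ w + v) - (w + v)) := by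
  have hincr := hP.quadratic_increment A w v
  have hw : 0 ≤ w ⬝ᵥ (P - Aᵀ * P * A) *ᵥ w := by simpa using hLyap.dotProduct_mulVec_nonneg w
  linarith

/-- sufficiency of the LMI conditions: V(x) = (1/2)xᵀPx satisfies the
discrete-time negative imaginary dissipation inequality
V(x_{k+1}) - V(x_k) ≤ u_kᵀ(y_{k+1} - y_k), where x_{k+1} = A x_k + B u_k, y = C x. -/
theorem stmt6 {n p : ℕ} (A : Matrix (Fin n) (Fin n) ℝ) (B : Matrix (Fin n) (Fin p) ℝ)
    (C : Matrix (Fin p) (Fin n) ℝ) (P : Matrix (Fin n) (Fin n) ℝ)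
    (hdet : (1 - A).det ≠ 0) (hP : P.PosDef)
    (hLyap : (P - Aᵀ * P * A).PosSemidef)
    (hC : C = Bᵀ * ((1 - A)⁻¹)ᵀ * P) :
    ∀ (xk : Fin n → ℝ) (uk : Fin p → ℝ),
      (1/2) * ((A *ᵥ xk + B *ᵥ uk) ⬝ᵥ (P *ᵥ (A *ᵥ xk + B *ᵥ uk)))
        - (1/2) * (xk ⬝ᵥ (P *ᵥ xk))
      ≤ uk ⬝ᵥ (C *ᵥ (A *ᵥ xk + B *ᵥ uk) - C *ᵥ xk) := by
  intro x u
  set v := (1 - A)⁻¹ *ᵥ B *ᵥ u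
  have hv : (1 - A) *ᵥ v = B *ᵥ u := by
    rw [mulVec_mulVec, mul_nonsing_inv _ hdet.isUnit, one_mulVec]
  have hnext : A *ᵥ x + B *ᵥ u = A *ᵥ (x - v) + v := by
    rw [← hv, sub_mulVec, one_mulVec, mulVec_sub]
    abel
  have hdiss := hLyap.half_quadratic_increment_le (isHermitian_iff_isSymm.mp hP.isHermitian)
    (x - v) v
  rw [sub_add_cancel] at hdiss
  rwa [← mulVec_sub, hC, dotProduct_transpose_mul_transpose_mul_mulVec, hnext]
end

section
/- Let G(s) = K(s) := (sI - ΓD)⁻¹Γ with Γ ∈ ℝ^{p×p} symmetric positive definite and D ∈ ℝ^{p×p} symmetric negative definite. Then K(s) is well-defined for all s with Re(s) ≥ 0 (i.e., sI - ΓD is invertible there), and for every ω > 0 the matrix j(K(jω) - K(jω)*) is positive definite; that is, K is strictly negative imaginary. -/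
open Matrix
open scoped ComplexOrder

/-!
If `ΓD x = s x` with `x ≠ 0`, then `y = D x` satisfies `y* Γ y = s · x* D x`, a positive
number equal to `s` times a negative one, so `Re s < 0`. On the imaginary axis
`A = jωI - ΓD` satisfies `Γ A* - A Γ = -2jω Γ`, hence
`j (A⁻¹Γ - (A⁻¹Γ)*) = j A⁻¹ (Γ A* - A Γ) A⁻* = 2ω A⁻¹ Γ A⁻*`,
a congruence of `Γ` by an invertible matrix.
-/

namespace Matrix

variable {n : Type*} [Fintype n]

lemma re_star_dotProduct_map_ofReal_mulVec (M : Matrix n n ℝ) (x : n → ℂ) :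
    (star x ⬝ᵥ M.map Complex.ofReal *ᵥ x).re =
      (fun i ↦ (x i).re) ⬝ᵥ M *ᵥ (fun i ↦ (x i).re) +
        (fun i ↦ (x i).im) ⬝ᵥ M *ᵥ (fun i ↦ (x i).im) := by
  simp only [dotProduct, mulVec, Complex.re_sum, Finset.mul_sum, ← Finset.sum_add_distrib]
  refine Finset.sum_congr rfl fun i _ ↦ Finset.sum_congr rfl fun j _ ↦ ?_
  simp [Complex.mul_re]

lemma PosDef.map_ofReal {M : Matrix n n ℝ} (hM : M.PosDef) :
    (M.map Complex.ofReal).PosDef := by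
  have hMc : (M.map Complex.ofReal).IsHermitian :=
    hM.1.map _ fun _ ↦ (Complex.conj_ofReal _).symm
  refine .of_dotProduct_mulVec_pos hMc fun x hx ↦ Complex.lt_def.mpr ⟨?_, ?_⟩
  · rw [re_star_dotProduct_map_ofReal_mulVec]
    have hre_or_im : (fun i ↦ (x i).re) ≠ 0 ∨ (fun i ↦ (x i).im) ≠ 0 := by
      by_contra! h
      exact hx (funext fun i ↦ Complex.ext (congrFun h.1 i) (congrFun h.2 i))
    rcases hre_or_im with h | h
    · exact add_pos_of_pos_of_nonneg (hM.dotProduct_mulVec_pos h)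
        (hM.posSemidef.dotProduct_mulVec_nonneg _)
    · exact add_pos_of_nonneg_of_pos (hM.posSemidef.dotProduct_mulVec_nonneg _)
        (hM.dotProduct_mulVec_pos h)
  · exact (hMc.im_star_dotProduct_mulVec_self x).symm

variable [DecidableEq n]

lemma isUnit_smul_one_sub_mul_of_posDef {P N : Matrix n n ℂ} (hP : P.PosDef) (hN : (-N).PosDef)
    {s : ℂ} (hs : 0 ≤ s.re) : IsUnit (s • 1 - P * N) := by
  by_contra h
  rw [isUnit_iff_isUnit_det, isUnit_iff_ne_zero, not_not, ← exists_mulVec_eq_zero_iff] at h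
  obtain ⟨x, hx, hker⟩ := h
  have hPy : P *ᵥ (N *ᵥ x) = s • x := by
    rw [sub_mulVec, smul_mulVec, one_mulVec, ← mulVec_mulVec, sub_eq_zero] at hker
    exact hker.symm
  have hq : 0 < -(star x ⬝ᵥ N *ᵥ x) := by
    simpa only [neg_mulVec, dotProduct_neg] using hN.dotProduct_mulVec_pos hx
  have hy : N *ᵥ x ≠ 0 := fun h ↦ by simp [h] at hq
  have hNx : star (N *ᵥ x) ⬝ᵥ x = star x ⬝ᵥ N *ᵥ x := by
    have hNherm : N.IsHermitian := by simpa using hN.1.neg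
    rw [star_mulVec, ← dotProduct_mulVec, hNherm.eq]
  have hsq : 0 < s * (star x ⬝ᵥ N *ᵥ x) := by
    simpa only [hPy, dotProduct_smul, smul_eq_mul, hNx] using hP.dotProduct_mulVec_pos hy
  set q := star x ⬝ᵥ N *ᵥ x
  obtain ⟨hq_re, hq_im⟩ : q.re < 0 ∧ q.im = 0 := by
    simpa [Complex.lt_def, eq_comm] using hq
  have hsq_re : 0 < s.re * q.re := by simpa [hq_im] using (Complex.lt_def.mp hsq).1
  exact hsq_re.not_ge (mul_nonpos_of_nonneg_of_nonpos hs hq_re.le)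

lemma inv_mul_sub_conjTranspose_inv_mul {R : Type*} [CommRing R] [StarRing R]
    {A P : Matrix n n R} (hA : IsUnit A) (hP : P.IsHermitian) :
    A⁻¹ * P - (A⁻¹ * P)ᴴ = A⁻¹ * (P * Aᴴ - A * P) * A⁻¹ᴴ := by
  have hdet : IsUnit A.det := (isUnit_iff_isUnit_det A).mp hA
  have hdetH : IsUnit Aᴴ.det := (isUnit_iff_isUnit_det Aᴴ).mp ((isUnit_conjTranspose A).mpr hA)
  rw [conjTranspose_mul, hP.eq, conjTranspose_nonsing_inv, Matrix.mul_sub, Matrix.sub_mul,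
    ← Matrix.mul_assoc, mul_nonsing_inv_cancel_right (A := Aᴴ) (A⁻¹ * P) hdetH,
    nonsing_inv_mul_cancel_left (A := A) P hdet]

lemma mul_conjTranspose_sub_mul_eq_smul {P N : Matrix n n ℂ}
    (hP : P.IsHermitian) (hN : N.IsHermitian) (ω : ℝ) :
    P * ((Complex.I * ω) • 1 - P * N)ᴴ - ((Complex.I * ω) • 1 - P * N) * P =
      (-(2 * Complex.I * ω)) • P := by
  have hconj : star (Complex.I * ω) = -(Complex.I * ω) := by simp
  rw [conjTranspose_sub, conjTranspose_smul, conjTranspose_one, conjTranspose_mul, hP.eq, hN.eq,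
    hconj, Matrix.mul_sub, Matrix.sub_mul, Matrix.mul_smul, Matrix.smul_mul, Matrix.mul_one,
    Matrix.one_mul, Matrix.mul_assoc]
  module

lemma posDef_I_smul_inv_mul_sub_conjTranspose {P N : Matrix n n ℂ}
    (hP : P.PosDef) (hN : (-N).PosDef) {ω : ℝ} (hω : 0 < ω) :
    (Complex.I • (((Complex.I * ω) • 1 - P * N)⁻¹ * P
      - (((Complex.I * ω) • 1 - P * N)⁻¹ * P)ᴴ)).PosDef := by
  set A := (Complex.I * ω) • 1 - P * N
  have hA : IsUnit A := isUnit_smul_one_sub_mul_of_posDef hP hN (by simp)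
  have hNherm : N.IsHermitian := by simpa using hN.1.neg
  have hscalar : Complex.I * (-(2 * Complex.I * ω)) = ((2 * ω : ℝ) : ℂ) := by
    push_cast
    linear_combination (-2 * (ω : ℂ)) * Complex.I_sq
  rw [inv_mul_sub_conjTranspose_inv_mul hA hP.1,
    mul_conjTranspose_sub_mul_eq_smul hP.1 hNherm ω, Matrix.mul_smul,
    Matrix.smul_mul, smul_smul, hscalar, ← star_eq_conjTranspose]
  exact ((IsUnit.posDef_star_right_conjugate_iff (isUnit_nonsing_inv_iff.mpr hA)).mpr hP).smul
    (Complex.zero_lt_real.mpr (by positivity))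

end Matrix

theorem stmt9_general {p : ℕ} (Γ D : Matrix (Fin p) (Fin p) ℝ)
    (hΓ : Γ.PosDef) (hDneg : (-D).PosDef) :
    (∀ s : ℂ, 0 ≤ s.re →
      IsUnit (s • (1 : Matrix (Fin p) (Fin p) ℂ) - (Γ * D).map Complex.ofReal)) ∧
    (∀ ω : ℝ, 0 < ω →
      (Complex.I •
        ((((Complex.I * ω) • (1 : Matrix (Fin p) (Fin p) ℂ)
            - (Γ * D).map Complex.ofReal)⁻¹ * Γ.map Complex.ofReal)
         - (((Complex.I * ω) • (1 : Matrix (Fin p) (Fin p) ℂ)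
            - (Γ * D).map Complex.ofReal)⁻¹ * Γ.map Complex.ofReal)ᴴ)).PosDef) := by
  have hmul : (Γ * D).map Complex.ofReal = Γ.map Complex.ofReal * D.map Complex.ofReal :=
    Matrix.map_mul (f := Complex.ofRealHom)
  have hΓc := hΓ.map_ofReal
  have hDc : (-D.map Complex.ofReal).PosDef := by simpa [Matrix.map_neg] using hDneg.map_ofReal
  rw [hmul]
  exact ⟨fun s hs ↦ isUnit_smul_one_sub_mul_of_posDef hΓc hDc hs,
    fun ω hω ↦ posDef_I_smul_inv_mul_sub_conjTranspose hΓc hDc hω⟩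

/-- the continuous-time IRC K(s) = (sI - ΓD)⁻¹Γ is well defined on the
closed right half plane and is strictly negative imaginary:
j(K(jω) - K(jω)*) > 0 for all ω > 0. -/
theorem stmt9 {p : ℕ} (Γ D : Matrix (Fin p) (Fin p) ℝ)
    (hΓ : Γ.PosDef) (hD : D.IsHermitian) (hDneg : (-D).PosDef) :
    (∀ s : ℂ, 0 ≤ s.re →
      IsUnit (s • (1 : Matrix (Fin p) (Fin p) ℂ) - (Γ * D).map Complex.ofReal)) ∧
    (∀ ω : ℝ, 0 < ω →
      (Complex.I •
        ((((Complex.I * ω) • (1 : Matrix (Fin p) (Fin p) ℂ)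
            - (Γ * D).map Complex.ofReal)⁻¹ * Γ.map Complex.ofReal)
         - (((Complex.I * ω) • (1 : Matrix (Fin p) (Fin p) ℂ)
            - (Γ * D).map Complex.ofReal)⁻¹ * Γ.map Complex.ofReal)ᴴ)).PosDef) :=
  stmt9_general Γ D hΓ hDneg
end

section
/- Let A, P ∈ ℝ^{n×n} with P symmetric positive definite and AᵀPA - P ≤ 0, let B = (I-A)P⁻¹Cᵀ for some C ∈ ℝ^{p×n} with det(I-A) ≠ 0, let Γ, D ∈ ℝ^{p×p} symmetric with Γ > 0 and D + 2Γ⁻¹ > 0. Define Q = [[P, -Cᵀ], [-C, -D]] and Â = [[A + BΓC, B + BΓD], [ΓC, I + ΓD]]. Then ÂᵀQÂ - Q = N₁ P⁻¹(AᵀPA - P)P⁻¹ N₁ᵀ - N₂ (D + 2Γ⁻¹) N₂ᵀ, where N₁ = [[CᵀΓC - P], [(I + DΓ)C]] and N₂ = [[CᵀΓ], [DΓ]], and consequently ÂᵀQÂ - Q ≤ 0. -/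
/-!
Once `B = (I - A)P⁻¹Cᵀ` is substituted, the identity is a blockwise expansion in which every
occurrence of `P⁻¹` or `Γ⁻¹` cancels against an adjacent `P` or `Γ`. The identity then exhibits
`Q - ÂᵀQÂ = N₂(D + 2Γ⁻¹)N₂ᵀ + (N₁P⁻¹)(P - AᵀPA)(N₁P⁻¹)ᵀ` as a sum of congruences of positive
semidefinite matrices.
-/

open Matrix

namespace Matrix

theorem PosSemidef.mul_mul_transpose_same {k n : Type*} [Fintype n] [Finite k]
    {S : Matrix n n ℝ} (hS : S.PosSemidef) (N : Matrix k n ℝ) : (N * S * Nᵀ).PosSemidef := by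
  simpa only [conjTranspose_eq_transpose_of_trivial] using hS.mul_mul_conjTranspose_same N

end Matrix

theorem lyapunov_difference_eq {m n R : Type*} [Fintype m] [Fintype n] [DecidableEq m]
    [DecidableEq n] [CommRing R] (A P : Matrix m m R) (C : Matrix n m R) (B : Matrix m n R)
    (Γ D : Matrix n n R) [Invertible P] [Invertible Γ] (hP : P.IsSymm) (hΓ : Γ.IsSymm)
    (hD : D.IsSymm) (hB : B = (1 - A) * P⁻¹ * Cᵀ) :
    (fromBlocks (A + B * Γ * C) (B + B * Γ * D) (Γ * C) (1 + Γ * D))ᵀ *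
        fromBlocks P (-Cᵀ) (-C) (-D) *
        fromBlocks (A + B * Γ * C) (B + B * Γ * D) (Γ * C) (1 + Γ * D) -
        fromBlocks P (-Cᵀ) (-C) (-D) =
      fromRows (Cᵀ * Γ * C - P) ((1 + D * Γ) * C) * P⁻¹ * (Aᵀ * P * A - P) * P⁻¹ *
          (fromRows (Cᵀ * Γ * C - P) ((1 + D * Γ) * C))ᵀ -
        fromRows (Cᵀ * Γ) (D * Γ) * (D + (2 : R) • Γ⁻¹) * (fromRows (Cᵀ * Γ) (D * Γ))ᵀ := by
  subst hB
  have hPinv : P⁻¹ᵀ = P⁻¹ := hP.inv.eq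
  simp only [fromBlocks_transpose, fromBlocks_multiply, transpose_fromRows, fromRows_mul,
    mul_fromCols, fromCols_fromRows_eq_fromBlocks, sub_eq_add_neg, fromBlocks_neg, fromBlocks_add,
    fromBlocks_inj]
  refine ⟨?_, ?_, ?_, ?_⟩ <;>
  · simp only [two_smul, transpose_add, transpose_mul, transpose_one, transpose_neg,
      transpose_transpose, hP.eq, hΓ.eq, hD.eq, hPinv, Matrix.mul_add, Matrix.add_mul, neg_add,
      Matrix.mul_neg, Matrix.neg_mul, neg_neg, Matrix.mul_one, Matrix.one_mul, Matrix.mul_assoc,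
      mul_inv_of_invertible, inv_mul_of_invertible, mul_inv_cancel_left_of_invertible]
    abel

theorem posSemidef_neg_sub_of_posSemidef {k n p : Type*} [Fintype n] [Fintype p] [Finite k]
    {S : Matrix n n ℝ} {M : Matrix p p ℝ} (hS : (-S).PosSemidef) (hM : M.PosSemidef)
    (N₁ : Matrix k n ℝ) (N₂ : Matrix k p ℝ) {W : Matrix n n ℝ} (hW : W.IsSymm) :
    (-(N₁ * W * S * W * N₁ᵀ - N₂ * M * N₂ᵀ)).PosSemidef := by
  have h : -(N₁ * W * S * W * N₁ᵀ - N₂ * M * N₂ᵀ) = N₂ * M * N₂ᵀ + N₁ * W * (-S) * (N₁ * W)ᵀ := by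
    simp only [transpose_mul, hW.eq, Matrix.mul_neg, Matrix.neg_mul, Matrix.mul_assoc]
    abel
  rw [h]
  exact (hM.mul_mul_transpose_same N₂).add (hS.mul_mul_transpose_same (N₁ * W))

theorem stmt12_general {n p : ℕ} (A P : Matrix (Fin n) (Fin n) ℝ)
    (C : Matrix (Fin p) (Fin n) ℝ) (B : Matrix (Fin n) (Fin p) ℝ)
    (Γ D : Matrix (Fin p) (Fin p) ℝ)
    (hP : P.PosDef) (hLyap : (P - Aᵀ * P * A).PosSemidef)
    (hB : B = (1 - A) * P⁻¹ * Cᵀ)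
    (hDs : D.IsHermitian)
    (hΓ : Γ.PosDef) (hDΓ : (D + (2:ℝ) • Γ⁻¹).PosDef) :
    (letI Q : Matrix (Fin n ⊕ Fin p) (Fin n ⊕ Fin p) ℝ :=
        Matrix.fromBlocks P (-Cᵀ) (-C) (-D)
     letI Ahat : Matrix (Fin n ⊕ Fin p) (Fin n ⊕ Fin p) ℝ :=
        Matrix.fromBlocks (A + B * Γ * C) (B + B * Γ * D) (Γ * C) (1 + Γ * D)
     letI N₁ : Matrix (Fin n ⊕ Fin p) (Fin n) ℝ :=
        Matrix.fromRows (Cᵀ * Γ * C - P) ((1 + D * Γ) * C)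
     letI N₂ : Matrix (Fin n ⊕ Fin p) (Fin p) ℝ :=
        Matrix.fromRows (Cᵀ * Γ) (D * Γ)
     Ahatᵀ * Q * Ahat - Q
        = N₁ * P⁻¹ * (Aᵀ * P * A - P) * P⁻¹ * N₁ᵀ
          - N₂ * (D + (2:ℝ) • Γ⁻¹) * N₂ᵀ ∧
     (Q - Ahatᵀ * Q * Ahat).PosSemidef) := by
  let := hP.isUnit.invertible
  let := hΓ.isUnit.invertible
  have hDifference := lyapunov_difference_eq A P C B Γ D hP.isHermitian hΓ.isHermitian hDs hB
  refine ⟨hDifference, ?_⟩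
  rw [← neg_sub, hDifference]
  rw [← neg_sub] at hLyap
  exact posSemidef_neg_sub_of_posSemidef hLyap hDΓ.posSemidef _ _ hP.isHermitian.inv

/-- the central Lyapunov decrease computation:
ÂᵀQÂ - Q = N₁P⁻¹(AᵀPA - P)P⁻¹N₁ᵀ - N₂(D + 2Γ⁻¹)N₂ᵀ ≤ 0. -/
theorem stmt12 {n p : ℕ} (A P : Matrix (Fin n) (Fin n) ℝ)
    (C : Matrix (Fin p) (Fin n) ℝ) (B : Matrix (Fin n) (Fin p) ℝ)
    (Γ D : Matrix (Fin p) (Fin p) ℝ)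
    (hP : P.PosDef) (hLyap : (P - Aᵀ * P * A).PosSemidef)
    (hdet : (1 - A).det ≠ 0) (hB : B = (1 - A) * P⁻¹ * Cᵀ)
    (hΓs : Γ.IsHermitian) (hDs : D.IsHermitian)
    (hΓ : Γ.PosDef) (hDΓ : (D + (2:ℝ) • Γ⁻¹).PosDef) :
    (letI Q : Matrix (Fin n ⊕ Fin p) (Fin n ⊕ Fin p) ℝ :=
        Matrix.fromBlocks P (-Cᵀ) (-C) (-D)
     letI Ahat : Matrix (Fin n ⊕ Fin p) (Fin n ⊕ Fin p) ℝ :=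
        Matrix.fromBlocks (A + B * Γ * C) (B + B * Γ * D) (Γ * C) (1 + Γ * D)
     letI N₁ : Matrix (Fin n ⊕ Fin p) (Fin n) ℝ :=
        Matrix.fromRows (Cᵀ * Γ * C - P) ((1 + D * Γ) * C)
     letI N₂ : Matrix (Fin n ⊕ Fin p) (Fin p) ℝ :=
        Matrix.fromRows (Cᵀ * Γ) (D * Γ)
     Ahatᵀ * Q * Ahat - Q
        = N₁ * P⁻¹ * (Aᵀ * P * A - P) * P⁻¹ * N₁ᵀ
          - N₂ * (D + (2:ℝ) • Γ⁻¹) * N₂ᵀ ∧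
     (Q - Ahatᵀ * Q * Ahat).PosSemidef) :=
  stmt12_general A P C B Γ D hP hLyap hB hDs hΓ hDΓ
end

section
/- Suppose the discrete-time linear system x_{k+1} = Ax_k + Bu_k, y_k = Cx_k is minimal (controllable and observable) with det(I-A) ≠ 0, and there is symmetric P > 0 with AᵀPA - P ≤ 0 and C = Bᵀ(I-A)^{-T}P. Let Γ, D ∈ ℝ^{p×p} be symmetric with Γ > 0 and -2Γ⁻¹ < D < -G(1), where G(1) = C(I-A)⁻¹B. Then the positive feedback interconnection with the discrete-time IRC x̃_{k+1} = (I+ΓD)x̃_k + Γy_k, u_k = (I+ΓD)x̃_k + Γy_k is asymptotically stable: every closed-loop trajectory (x_k, x̃_k) converges to (0,0). -/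
/-!
Write `u k = xt (k + 1)` for the plant input and `F = (I - A)⁻¹ B`, so that `B = (I - A) F` and
`C = Fᵀ P`. In the coordinates `e = x - F u`, `w = u` the closed loop is a linear recursion
`z (k + 1) = T z k`, and with `M = -G(1) - D > 0` and the feedback signal `s = C A e - M w`,
the function `V(e, w) = eᵀ P e + wᵀ M w` satisfies
`V(T z) = (A e)ᵀ P (A e) + wᵀ M w - sᵀ Γ (D + 2 Γ⁻¹) Γ s ≤ V(z)`.
If `T z = μ z` for a complex `z ≠ 0` with `|μ| ≥ 1`, this forces `s = 0`, hence `A e = μ e` and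
`w = μ w`. For `μ = 1` the invertibility of `I - A` and of `M` gives `z = 0`; otherwise `w = 0`,
`C e = 0`, and observability gives `e = 0`. So every eigenvalue of `T` lies in the open unit disc,
and `T ^ k → 0` by Gelfand's formula.
-/

open Matrix Filter Topology

section Complexification

open scoped MatrixOrder ComplexOrder

variable {m n : Type*}

theorem Matrix.conjTranspose_map_ofRealHom (X : Matrix m n ℝ) :
    (X.map Complex.ofRealHom)ᴴ = Xᵀ.map Complex.ofRealHom := by
  rw [← conjTranspose_map (⇑Complex.ofRealHom) fun _ => (Complex.conj_ofReal _).symm,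
    conjTranspose_eq_transpose_of_trivial]

theorem Matrix.PosSemidef.map_ofRealHom [Fintype m] {X : Matrix m m ℝ} (hX : X.PosSemidef) :
    (X.map Complex.ofRealHom).PosSemidef := by
  classical
  obtain ⟨B, rfl⟩ := CStarAlgebra.nonneg_iff_eq_star_mul_self.mp hX.nonneg
  rw [star_eq_conjTranspose, Matrix.map_mul, conjTranspose_eq_transpose_of_trivial,
    ← conjTranspose_map_ofRealHom]
  exact posSemidef_conjTranspose_mul_self _

theorem Matrix.PosDef.map_ofRealHom [Fintype m] [DecidableEq m] {X : Matrix m m ℝ}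
    (hX : X.PosDef) : (X.map Complex.ofRealHom).PosDef := by
  rw [hX.posSemidef.map_ofRealHom.posDef_iff_det_ne_zero, ← RingHom.mapMatrix_apply,
    ← RingHom.map_det]
  exact Complex.ofReal_ne_zero.mpr hX.det_pos.ne'

theorem Matrix.re_mulVec_map_ofRealHom [Fintype m] (X : Matrix n m ℝ) (v : m → ℂ) :
    (fun i => (X.map Complex.ofRealHom *ᵥ v) i |>.re) = X *ᵥ fun j => (v j).re := by
  ext i
  simp [mulVec, dotProduct, Complex.re_sum]

theorem Matrix.im_mulVec_map_ofRealHom [Fintype m] (X : Matrix n m ℝ) (v : m → ℂ) :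
    (fun i => (X.map Complex.ofRealHom *ᵥ v) i |>.im) = X *ᵥ fun j => (v j).im := by
  ext i
  simp [mulVec, dotProduct, Complex.im_sum]

end Complexification

section SchurStability

attribute [local instance] Matrix.linftyOpNormedAddCommGroup Matrix.linftyOpNormedRing
  Matrix.linftyOpNormedAlgebra

theorem tendsto_pow_atTop_nhds_zero_of_spectrum_norm_lt_one {𝔸 : Type*} [NormedRing 𝔸]
    [NormedAlgebra ℂ 𝔸] [CompleteSpace 𝔸] {a : 𝔸} (h : ∀ z ∈ spectrum ℂ a, ‖z‖ < 1) :
    Tendsto (fun k : ℕ => a ^ k) atTop (𝓝 0) := by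
  rcases subsingleton_or_nontrivial 𝔸 with h𝔸 | h𝔸
  · simp [Subsingleton.elim _ (0 : 𝔸)]
  obtain ⟨z, hz, hρ⟩ := spectrum.exists_nnnorm_eq_spectralRadius a
  obtain ⟨c, hzc, hc1⟩ : ∃ c : ℝ, ‖z‖ < c ∧ c < 1 := exists_between (h z hz)
  have hc0 : 0 < c := (norm_nonneg z).trans_lt hzc
  have hρc : spectralRadius ℂ a < ENNReal.ofReal c := by
    rw [← hρ, ← ENNReal.ofReal_coe_nnreal, coe_nnnorm]
    exact (ENNReal.ofReal_lt_ofReal_iff hc0).mpr hzc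
  -- Gelfand's formula: eventually `‖a ^ k‖ ^ (1 / k) < c`
  have hnorm : ∀ᶠ k : ℕ in atTop, ‖a ^ k‖ ≤ c ^ k := by
    filter_upwards [(spectrum.pow_norm_pow_one_div_tendsto_nhds_spectralRadius
      a).eventually_lt_const hρc, eventually_ne_atTop 0] with k hk hk0
    calc ‖a ^ k‖ = (‖a ^ k‖ ^ (1 / k : ℝ)) ^ k := by
          rw [one_div, Real.rpow_inv_natCast_pow (norm_nonneg _) hk0]
      _ ≤ c ^ k := by gcongr; exact ((ENNReal.ofReal_lt_ofReal_iff hc0).mp hk).le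
  exact squeeze_zero_norm' hnorm (tendsto_pow_atTop_nhds_zero_of_lt_one hc0.le hc1)

theorem Matrix.tendsto_pow_mulVec_of_eigenvalue_norm_lt_one {m : Type*} [Fintype m]
    [DecidableEq m] (T : Matrix m m ℝ)
    (h : ∀ (μ : ℂ) (v : m → ℂ), v ≠ 0 → T.map Complex.ofRealHom *ᵥ v = μ • v → ‖μ‖ < 1)
    (u : m → ℝ) :
    Tendsto (fun k => T ^ k *ᵥ u) atTop (𝓝 0) := by
  have hpow : Tendsto (fun k : ℕ => T.map Complex.ofRealHom ^ k) atTop (𝓝 0) := by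
    refine tendsto_pow_atTop_nhds_zero_of_spectrum_norm_lt_one fun μ hμ => ?_
    rw [← spectrum_toLin', ← Module.End.hasEigenvalue_iff_mem_spectrum] at hμ
    obtain ⟨v, hv⟩ := hμ.exists_hasEigenvector
    exact h μ v hv.2 (by simpa using hv.apply_eq_smul)
  have hvec : Tendsto (fun k => T.map Complex.ofRealHom ^ k *ᵥ fun j => (u j : ℂ)) atTop
      (𝓝 (0 *ᵥ fun j => (u j : ℂ))) :=
    ((continuous_id.matrix_mulVec continuous_const).tendsto 0).comp hpow
  have hre : Tendsto (fun k i => ((T.map Complex.ofRealHom ^ k *ᵥ fun j => (u j : ℂ)) i).re)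
      atTop (𝓝 0) := by
    simpa [Function.comp_def, ← Pi.zero_def] using
      ((continuous_pi fun i => Complex.continuous_re.comp (continuous_apply i)).tendsto _).comp hvec
  refine hre.congr fun k => ?_
  rw [← RingHom.mapMatrix_apply, ← map_pow, RingHom.mapMatrix_apply]
  simpa using re_mulVec_map_ofRealHom (T ^ k) fun j => (u j : ℂ)

end SchurStability

def IsObservable {ι κ R : Type*} [Fintype ι] [DecidableEq ι] [Semiring R] (C : Matrix κ ι R)
    (A : Matrix ι ι R) : Prop :=
  ∀ v : ι → R, (∀ k : ℕ, C *ᵥ (A ^ k *ᵥ v) = 0) → v = 0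

theorem IsObservable.map_ofRealHom {ι κ : Type*} [Fintype ι] [DecidableEq ι]
    {C : Matrix κ ι ℝ} {A : Matrix ι ι ℝ} (h : IsObservable C A) :
    IsObservable (C.map Complex.ofRealHom) (A.map Complex.ofRealHom) := by
  intro v hv
  have hCA (k : ℕ) : (C * A ^ k).map Complex.ofRealHom *ᵥ v = 0 := by
    rw [Matrix.map_mul, ← mulVec_mulVec, ← RingHom.mapMatrix_apply _ (A ^ k), map_pow]
    exact hv k
  have hre := h _ fun k => by
    rw [mulVec_mulVec, ← re_mulVec_map_ofRealHom, hCA k]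
    rfl
  have him := h _ fun k => by
    rw [mulVec_mulVec, ← im_mulVec_map_ofRealHom, hCA k]
    rfl
  exact funext fun i => Complex.ext (congrFun hre i) (congrFun him i)

section QuadraticForms

variable {ι κ R : Type*} [Fintype ι] [Fintype κ]

theorem Matrix.star_dotProduct_conjTranspose_mul_mul_mulVec [CommRing R] [StarRing R]
    (X : Matrix κ ι R) (Y : Matrix κ κ R) (z : ι → R) :
    star z ⬝ᵥ ((Xᴴ * Y * X) *ᵥ z) = star (X *ᵥ z) ⬝ᵥ (Y *ᵥ (X *ᵥ z)) := by
  simp only [star_mulVec, dotProduct_mulVec, vecMul_vecMul, Matrix.mul_assoc]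

theorem Matrix.star_sumElim_dotProduct_fromBlocks_mulVec [CommRing R] [StarRing R]
    (X : Matrix ι ι R) (Y : Matrix κ κ R) (u : ι → R) (v : κ → R) :
    star (Sum.elim u v) ⬝ᵥ (fromBlocks X 0 0 Y *ᵥ Sum.elim u v) =
      star u ⬝ᵥ (X *ᵥ u) + star v ⬝ᵥ (Y *ᵥ v) := by
  simp [fromBlocks_mulVec, Function.star_sumElim, sumElim_dotProduct_sumElim]

theorem Matrix.conjTranspose_feedback_mul_mul_feedback [Ring R] [StarRing R]
    {E Q : Matrix ι ι R} {G : Matrix ι κ R} {Γ D : Matrix κ κ R} {S : Matrix κ ι R}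
    (hQ : Qᴴ = Q) (hΓ : Γᴴ = Γ) (hEG : Eᴴ * Q * G = -Sᴴ) (hG : Gᴴ * Q * G = -D) :
    (E + G * Γ * S)ᴴ * Q * (E + G * Γ * S) = Eᴴ * Q * E - Sᴴ * (Γ + Γ + Γ * D * Γ) * S := by
  have hGE : Gᴴ * Q * E = -S := by
    simpa [conjTranspose_mul, hQ, Matrix.mul_assoc] using congrArg conjTranspose hEG
  calc (E + G * Γ * S)ᴴ * Q * (E + G * Γ * S)
      = Eᴴ * Q * E + Eᴴ * Q * G * Γ * S + Sᴴ * Γᴴ * (Gᴴ * Q * E)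
          + Sᴴ * Γᴴ * (Gᴴ * Q * G) * Γ * S := by
        simp only [conjTranspose_add, conjTranspose_mul, Matrix.add_mul, Matrix.mul_add,
          Matrix.mul_assoc]
        abel
    _ = Eᴴ * Q * E - Sᴴ * (Γ + Γ + Γ * D * Γ) * S := by
        rw [hEG, hGE, hG, hΓ]
        simp only [Matrix.add_mul, Matrix.mul_add, Matrix.mul_assoc, Matrix.neg_mul,
          Matrix.mul_neg]
        abel

theorem Matrix.PosDef.add_add_mul_mul [DecidableEq κ] {K : Type*} [Field K] [PartialOrder K]
    [StarRing K] {Γ D : Matrix κ κ K} (hΓ : Γ.PosDef) (hD : (D + (2 : K) • Γ⁻¹).PosDef) :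
    (Γ + Γ + Γ * D * Γ).PosDef := by
  convert hD.conjTranspose_mul_mul_same (mulVec_injective_iff_isUnit.mpr hΓ.isUnit) using 1
  rw [hΓ.1.eq, Matrix.mul_add, Matrix.add_mul, Matrix.mul_smul, Matrix.smul_mul,
    mul_nonsing_inv _ ((isUnit_iff_isUnit_det Γ).mp hΓ.isUnit), Matrix.one_mul, two_smul]
  abel

end QuadraticForms

section ClosedLoop

variable {ι κ R : Type*} [Fintype ι] [Fintype κ] [DecidableEq κ]

/-- The matrix `T` of the closed loop in the coordinates `(e, w)`: `diag(A, I)` fed back through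
the signal `s = C A e - M w`. -/
def closedLoop [Ring R] (A : Matrix ι ι R) (F : Matrix ι κ R) (C : Matrix κ ι R)
    (Γ M : Matrix κ κ R) : Matrix (ι ⊕ κ) (ι ⊕ κ) R :=
  fromBlocks A 0 0 1 + fromRows (-F) 1 * Γ * fromCols (C * A) (-M)

variable [CommRing R] {A : Matrix ι ι R} {F : Matrix ι κ R} {C : Matrix κ ι R}
  {Γ M : Matrix κ κ R}

theorem closedLoop_mulVec_sumElim (e : ι → R) (w : κ → R) :
    closedLoop A F C Γ M *ᵥ Sum.elim e w =
      Sum.elim (A *ᵥ e - F *ᵥ (Γ *ᵥ (C *ᵥ (A *ᵥ e) - M *ᵥ w)))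
        (w + Γ *ᵥ (C *ᵥ (A *ᵥ e) - M *ᵥ w)) := by
  simp only [closedLoop, add_mulVec, fromBlocks_mulVec, ← mulVec_mulVec, fromCols_mulVec_sumElim,
    fromRows_mulVec, Sum.elim_comp_inl, Sum.elim_comp_inr, zero_mulVec, add_zero, zero_add,
    one_mulVec, neg_mulVec, sub_eq_add_neg, Sum.elim_add_add]

theorem closedLoop_map {S : Type*} [Ring S] (f : R →+* S) :
    (closedLoop A F C Γ M).map f =
      closedLoop (A.map f) (F.map f) (C.map f) (Γ.map f) (M.map f) := by
  simp [closedLoop, Matrix.map_add, Matrix.map_mul, Matrix.map_neg, fromBlocks_map]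

theorem conjTranspose_closedLoop_mul_mul_closedLoop [StarRing R] {P : Matrix ι ι R}
    {D : Matrix κ κ R} (hP : Pᴴ = P) (hM : Mᴴ = M) (hΓ : Γᴴ = Γ) (hC : C = Fᴴ * P)
    (hMD : M = -(C * F) - D) :
    (closedLoop A F C Γ M)ᴴ * fromBlocks P 0 0 M * closedLoop A F C Γ M =
      fromBlocks (Aᴴ * P * A) 0 0 M -
        (fromCols (C * A) (-M))ᴴ * (Γ + Γ + Γ * D * Γ) * fromCols (C * A) (-M) := by
  have hQ : (fromBlocks P 0 0 M)ᴴ = fromBlocks P 0 0 M := by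
    simp [fromBlocks_conjTranspose, hP, hM]
  rw [closedLoop, conjTranspose_feedback_mul_mul_feedback hQ hΓ (D := D) ?_ ?_]
  · simp [fromBlocks_conjTranspose, fromBlocks_multiply]
  · rw [fromBlocks_conjTranspose, fromBlocks_multiply, fromBlocks_mul_fromRows,
      conjTranspose_fromCols_eq_fromRows_conjTranspose]
    simp [hC, hP, hM, Matrix.mul_assoc]
  · rw [conjTranspose_fromRows_eq_fromCols_conjTranspose, fromCols_mul_fromBlocks,
      fromCols_mul_fromRows, hMD, hC]
    simp [Matrix.mul_assoc]
    abel

theorem sumElim_eq_closedLoop_pow_mulVec [DecidableEq ι] {B : Matrix ι κ R} {D : Matrix κ κ R}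
    (hB : B = (1 - A) * F) (hMD : M = -(C * F) - D) {x : ℕ → ι → R} {xt : ℕ → κ → R}
    (hx : ∀ k, x (k + 1) = A *ᵥ x k + B *ᵥ ((1 + Γ * D) *ᵥ xt k + Γ *ᵥ (C *ᵥ x k)))
    (hxt : ∀ k, xt (k + 1) = (1 + Γ * D) *ᵥ xt k + Γ *ᵥ (C *ᵥ x k)) (k : ℕ) :
    Sum.elim (x k - F *ᵥ xt (k + 1)) (xt (k + 1)) =
      closedLoop A F C Γ M ^ k *ᵥ Sum.elim (x 0 - F *ᵥ xt 1) (xt 1) := by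
  induction k with
  | zero => simp
  | succ k ih =>
    rw [pow_succ', ← mulVec_mulVec, ← ih, closedLoop_mulVec_sumElim]
    set e := x k - F *ᵥ xt (k + 1) with he
    set w := xt (k + 1)
    have hx' : x (k + 1) = A *ᵥ e + F *ᵥ w := by
      rw [hx, ← hxt, hB, he, ← mulVec_mulVec, sub_mulVec, one_mulVec, mulVec_sub]
      abel
    have hxt' : xt (k + 2) = w + Γ *ᵥ (C *ᵥ (A *ᵥ e) - M *ᵥ w) := by
      rw [hxt (k + 1), hx', hMD]
      simp only [add_mulVec, one_mulVec, sub_mulVec, neg_mulVec, mulVec_add, mulVec_sub,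
        mulVec_neg, ← mulVec_mulVec]
      abel
    rw [hxt', hx']
    congr 1
    simp only [mulVec_add]
    abel

end ClosedLoop

section Eigenvalues

variable {ι κ 𝕜 : Type*} [Fintype ι] [Fintype κ] [DecidableEq κ]

open scoped ComplexOrder in
theorem closedLoop_feedback_eq_zero_of_mulVec_eq_smul [RCLike 𝕜] {A P : Matrix ι ι 𝕜}
    {F : Matrix ι κ 𝕜} {C : Matrix κ ι 𝕜} {Γ D M : Matrix κ κ 𝕜} (hP : P.PosSemidef)
    (hLyap : (P - Aᴴ * P * A).PosSemidef) (hM : M.PosSemidef) (hΓ : Γᴴ = Γ)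
    (hC : C = Fᴴ * P) (hMD : M = -(C * F) - D) (hR : (Γ + Γ + Γ * D * Γ).PosDef)
    {μ : 𝕜} (hμ : 1 ≤ ‖μ‖) {e : ι → 𝕜} {w : κ → 𝕜}
    (h : closedLoop A F C Γ M *ᵥ Sum.elim e w = μ • Sum.elim e w) :
    C *ᵥ (A *ᵥ e) = M *ᵥ w := by
  set s := C *ᵥ (A *ᵥ e) - M *ᵥ w
  have hS : fromCols (C * A) (-M) *ᵥ Sum.elim e w = s := by
    simp [← mulVec_mulVec, s, sub_eq_add_neg, neg_mulVec]
  have hV : ((‖μ‖ ^ 2 : ℝ) : 𝕜) * (star e ⬝ᵥ (P *ᵥ e) + star w ⬝ᵥ (M *ᵥ w)) =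
      star (A *ᵥ e) ⬝ᵥ (P *ᵥ (A *ᵥ e)) + star w ⬝ᵥ (M *ᵥ w) -
        star s ⬝ᵥ ((Γ + Γ + Γ * D * Γ) *ᵥ s) := by
    have := congrArg (fun X => star (Sum.elim e w) ⬝ᵥ (X *ᵥ Sum.elim e w))
      (conjTranspose_closedLoop_mul_mul_closedLoop (A := A) hP.1 hM.1 hΓ hC hMD)
    rwa [sub_mulVec, dotProduct_sub, star_dotProduct_conjTranspose_mul_mul_mulVec,
      star_dotProduct_conjTranspose_mul_mul_mulVec, h, hS, star_smul, mulVec_smul,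
      smul_dotProduct, dotProduct_smul, star_sumElim_dotProduct_fromBlocks_mulVec,
      star_sumElim_dotProduct_fromBlocks_mulVec, star_dotProduct_conjTranspose_mul_mul_mulVec,
      smul_eq_mul, smul_eq_mul, ← mul_assoc, RCLike.star_def, RCLike.conj_mul,
      ← RCLike.ofReal_pow] at this
  have hAe : RCLike.re (star (A *ᵥ e) ⬝ᵥ (P *ᵥ (A *ᵥ e))) ≤ RCLike.re (star e ⬝ᵥ (P *ᵥ e)) := by
    have := hLyap.re_dotProduct_nonneg e
    rw [sub_mulVec, dotProduct_sub, star_dotProduct_conjTranspose_mul_mul_mulVec, map_sub] at this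
    linarith
  replace hV := congrArg RCLike.re hV
  rw [RCLike.re_ofReal_mul, map_add, map_sub, map_add] at hV
  rw [← sub_eq_zero]
  by_contra hs
  nlinarith [hP.re_dotProduct_nonneg e, hM.re_dotProduct_nonneg w, hR.re_dotProduct_pos hs,
    one_le_pow₀ (n := 2) hμ]

theorem eq_zero_of_closedLoop_mulVec_eq_smul [DecidableEq ι] [Field 𝕜] {A : Matrix ι ι 𝕜}
    {F : Matrix ι κ 𝕜} {C : Matrix κ ι 𝕜} {Γ M : Matrix κ κ 𝕜} (hA : (1 - A).det ≠ 0)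
    (hM : M.det ≠ 0) (hobs : IsObservable C A) {μ : 𝕜} (hμ : μ ≠ 0) {e : ι → 𝕜} {w : κ → 𝕜}
    (hs : C *ᵥ (A *ᵥ e) = M *ᵥ w) (h : closedLoop A F C Γ M *ᵥ Sum.elim e w = μ • Sum.elim e w) :
    e = 0 ∧ w = 0 := by
  rw [closedLoop_mulVec_sumElim, hs, sub_self, mulVec_zero, mulVec_zero, sub_zero, add_zero] at h
  have hAe : A *ᵥ e = μ • e := funext fun i => by simpa using congrFun h (Sum.inl i)
  have hw : w = μ • w := funext fun i => by simpa using congrFun h (Sum.inr i)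
  by_cases hμ1 : μ = 1
  · subst hμ1
    have he : e = 0 :=
      eq_zero_of_mulVec_eq_zero hA (by rw [sub_mulVec, hAe, one_mulVec, one_smul, sub_self])
    refine ⟨he, eq_zero_of_mulVec_eq_zero hM ?_⟩
    rw [← hs, he, mulVec_zero, mulVec_zero]
  · have hw0 : w = 0 := by
      have : (μ - 1) • w = 0 := by rw [sub_smul, ← hw, one_smul, sub_self]
      exact (smul_eq_zero.mp this).resolve_left (sub_ne_zero.mpr hμ1)
    have hCe : C *ᵥ e = 0 := by
      rw [hw0, mulVec_zero, hAe, mulVec_smul] at hs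
      exact (smul_eq_zero.mp hs).resolve_left hμ
    refine ⟨hobs e fun k => ?_, hw0⟩
    have hpow : A ^ k *ᵥ e = μ ^ k • e := by
      induction k with
      | zero => simp
      | succ k ih => rw [pow_succ', ← mulVec_mulVec, ih, mulVec_smul, hAe, smul_smul, pow_succ]
    rw [hpow, mulVec_smul, hCe, smul_zero]

open scoped ComplexOrder in
theorem norm_lt_one_of_closedLoop_mulVec_eq_smul [DecidableEq ι] [RCLike 𝕜]
    {A P : Matrix ι ι 𝕜} {F : Matrix ι κ 𝕜} {C : Matrix κ ι 𝕜} {Γ D M : Matrix κ κ 𝕜}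
    (hP : P.PosDef) (hLyap : (P - Aᴴ * P * A).PosSemidef) (hM : M.PosDef) (hΓ : Γᴴ = Γ)
    (hC : C = Fᴴ * P) (hMD : M = -(C * F) - D) (hR : (Γ + Γ + Γ * D * Γ).PosDef)
    (hA : (1 - A).det ≠ 0) (hobs : IsObservable C A)
    {μ : 𝕜} {z : ι ⊕ κ → 𝕜} (hz : z ≠ 0) (h : closedLoop A F C Γ M *ᵥ z = μ • z) :
    ‖μ‖ < 1 := by
  by_contra! hμ
  rw [← Sum.elim_comp_inl_inr z] at h hz
  have hs := closedLoop_feedback_eq_zero_of_mulVec_eq_smul hP.posSemidef hLyap hM.posSemidef hΓ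
    hC hMD hR hμ h
  obtain ⟨he, hw⟩ := eq_zero_of_closedLoop_mulVec_eq_smul hA hM.det_pos.ne' hobs
    (norm_pos_iff.mp (one_pos.trans_le hμ)) hs h
  exact hz (by rw [he, hw, Sum.elim_zero_zero])

theorem norm_lt_one_of_closedLoop_map_ofRealHom_mulVec_eq_smul [DecidableEq ι]
    {A P : Matrix ι ι ℝ} {F : Matrix ι κ ℝ} {C : Matrix κ ι ℝ} {Γ D M : Matrix κ κ ℝ}
    (hP : P.PosDef) (hLyap : (P - Aᵀ * P * A).PosSemidef) (hM : M.PosDef) (hΓ : Γ.IsHermitian)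
    (hC : C = Fᵀ * P) (hMD : M = -(C * F) - D) (hR : (Γ + Γ + Γ * D * Γ).PosDef)
    (hA : (1 - A).det ≠ 0) (hobs : IsObservable C A) {μ : ℂ} {z : ι ⊕ κ → ℂ} (hz : z ≠ 0)
    (h : (closedLoop A F C Γ M).map Complex.ofRealHom *ᵥ z = μ • z) :
    ‖μ‖ < 1 := by
  rw [closedLoop_map] at h
  refine norm_lt_one_of_closedLoop_mulVec_eq_smul (D := D.map Complex.ofRealHom)
    hP.map_ofRealHom ?_ hM.map_ofRealHom ?_ ?_ ?_ ?_ ?_ hobs.map_ofRealHom hz h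
  · simpa [Matrix.map_sub, Matrix.map_mul, conjTranspose_map_ofRealHom] using
      hLyap.map_ofRealHom
  · rw [conjTranspose_map_ofRealHom, ← conjTranspose_eq_transpose_of_trivial, hΓ.eq]
  · rw [conjTranspose_map_ofRealHom, hC, Matrix.map_mul]
  · rw [hMD, Matrix.map_sub _ (map_sub Complex.ofRealHom),
      Matrix.map_neg _ (map_neg Complex.ofRealHom), Matrix.map_mul]
  · simpa [Matrix.map_add, Matrix.map_mul] using hR.map_ofRealHom
  · rw [← Matrix.map_one _ (map_zero Complex.ofRealHom) (map_one Complex.ofRealHom),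
      ← Matrix.map_sub _ (map_sub Complex.ofRealHom), ← RingHom.mapMatrix_apply,
      ← RingHom.map_det]
    exact Complex.ofReal_ne_zero.mpr hA

end Eigenvalues

theorem stmt13_general {n p : ℕ} (A : Matrix (Fin n) (Fin n) ℝ) (B : Matrix (Fin n) (Fin p) ℝ)
    (C : Matrix (Fin p) (Fin n) ℝ) (P : Matrix (Fin n) (Fin n) ℝ)
    (Γ D : Matrix (Fin p) (Fin p) ℝ)
    -- minimality
    (hobs : ∀ v : Fin n → ℝ, (∀ k : ℕ, C *ᵥ (A^k *ᵥ v) = 0) → v = 0)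
    -- NI LMI conditions
    (hdet : (1 - A).det ≠ 0) (hP : P.PosDef)
    (hLyap : (P - Aᵀ * P * A).PosSemidef)
    (hC : C = Bᵀ * ((1 - A)⁻¹)ᵀ * P)
    -- IRC parameter conditions: Γ > 0, -2Γ⁻¹ < D < -G(1)
    (hΓ : Γ.PosDef)
    (hlow : (D + (2:ℝ) • Γ⁻¹).PosDef)
    (hhigh : (-(C * (1 - A)⁻¹ * B) - D).PosDef) :
    ∀ (x : ℕ → Fin n → ℝ) (xt : ℕ → Fin p → ℝ),
      (∀ k, x (k+1) = A *ᵥ x k + B *ᵥ ((1 + Γ * D) *ᵥ xt k + Γ *ᵥ (C *ᵥ x k))) →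
      (∀ k, xt (k+1) = (1 + Γ * D) *ᵥ xt k + Γ *ᵥ (C *ᵥ x k)) →
      Tendsto x atTop (𝓝 0) ∧ Tendsto xt atTop (𝓝 0) := by
  intro x xt hx hxt
  set F := (1 - A)⁻¹ * B with hF
  set M := -(C * F) - D with hMD
  have hB : B = (1 - A) * F := by
    rw [hF, ← Matrix.mul_assoc, mul_nonsing_inv _ (isUnit_iff_ne_zero.mpr hdet), Matrix.one_mul]
  have hM : M.PosDef := by rwa [hMD, hF, ← Matrix.mul_assoc]
  have hz : Tendsto (fun k => Sum.elim (x k - F *ᵥ xt (k + 1)) (xt (k + 1))) atTop (𝓝 0) := by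
    refine (tendsto_pow_mulVec_of_eigenvalue_norm_lt_one _ (fun μ z hz h => ?_) _).congr
      fun k => (sumElim_eq_closedLoop_pow_mulVec hB hMD hx hxt k).symm
    exact norm_lt_one_of_closedLoop_map_ofRealHom_mulVec_eq_smul hP hLyap hM hΓ.1
      (by rw [hC, hF, transpose_mul]) hMD (hΓ.add_add_mul_mul hlow) hdet hobs hz h
  have he : Tendsto (fun k => x k - F *ᵥ xt (k + 1)) atTop (𝓝 0) :=
    tendsto_pi_nhds.mpr fun i => by simpa using tendsto_pi_nhds.mp hz (Sum.inl i)
  have hw : Tendsto (fun k => xt (k + 1)) atTop (𝓝 0) :=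
    tendsto_pi_nhds.mpr fun i => by simpa using tendsto_pi_nhds.mp hz (Sum.inr i)
  refine ⟨?_, (tendsto_add_atTop_iff_nat 1).mp hw⟩
  simpa using he.add (((continuous_const.matrix_mulVec continuous_id).tendsto' 0 0
    (mulVec_zero F)).comp hw)

/-- main theorem: the positive feedback interconnection of a minimal
discrete-time NI plant with a discrete-time IRC satisfying -2Γ⁻¹ < D < -G(1) is
asymptotically stable: every closed-loop trajectory converges to the origin. -/
theorem stmt13 {n p : ℕ} (A : Matrix (Fin n) (Fin n) ℝ) (B : Matrix (Fin n) (Fin p) ℝ)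
    (C : Matrix (Fin p) (Fin n) ℝ) (P : Matrix (Fin n) (Fin n) ℝ)
    (Γ D : Matrix (Fin p) (Fin p) ℝ)
    -- minimality
    (hctrb : ∀ v : Fin n → ℝ, (∀ k : ℕ, Bᵀ *ᵥ ((Aᵀ)^k *ᵥ v) = 0) → v = 0)
    (hobs : ∀ v : Fin n → ℝ, (∀ k : ℕ, C *ᵥ (A^k *ᵥ v) = 0) → v = 0)
    -- NI LMI conditions
    (hdet : (1 - A).det ≠ 0) (hP : P.PosDef)
    (hLyap : (P - Aᵀ * P * A).PosSemidef)
    (hC : C = Bᵀ * ((1 - A)⁻¹)ᵀ * P)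
    -- IRC parameter conditions: Γ > 0, -2Γ⁻¹ < D < -G(1)
    (hΓ : Γ.PosDef) (hDs : D.IsHermitian)
    (hlow : (D + (2:ℝ) • Γ⁻¹).PosDef)
    (hhigh : (-(C * (1 - A)⁻¹ * B) - D).PosDef) :
    ∀ (x : ℕ → Fin n → ℝ) (xt : ℕ → Fin p → ℝ),
      (∀ k, x (k+1) = A *ᵥ x k + B *ᵥ ((1 + Γ * D) *ᵥ xt k + Γ *ᵥ (C *ᵥ x k))) →
      (∀ k, xt (k+1) = (1 + Γ * D) *ᵥ xt k + Γ *ᵥ (C *ᵥ x k)) →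
      Tendsto x atTop (𝓝 0) ∧ Tendsto xt atTop (𝓝 0) :=
  stmt13_general A B C P Γ D hobs hdet hP hLyap hC hΓ hlow hhigh
end
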